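/- For given ρ₀, J_x⁰, J_y⁰, the vector m₀ = (ρ₀, J_x⁰, J_y⁰, α λ² ρ₀, 0, 0, −λ² J_x⁰, −λ² J_y⁰, β λ⁴ ρ₀)ᵗ solves K m₀ = M ξ₀ for the mixed bounce back / anti bounce back boundary scheme, where ξ₀ = (0, 0, (4−α−2β)ρ₀/18, 0, 0, (J_x⁰ + J_y⁰)/(6λ), (−J_x⁰ + J_y⁰)/(6λ), 0, 0)ᵗ. -/

import Mathlib

open Matrix

noncomputable section

/-- D2Q9 moment matrix (equation 5). -/
def Md (l : ℝ) : Matrix (Fin 9) (Fin 9) ℝ :=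
  !![1, 1, 1, 1, 1, 1, 1, 1, 1;
     0, l, 0, -l, 0, l, -l, -l, l;
     0, 0, l, 0, -l, l, l, -l, -l;
     -4*l^2, -l^2, -l^2, -l^2, -l^2, 2*l^2, 2*l^2, 2*l^2, 2*l^2;
     0, l^2, -l^2, l^2, -l^2, 0, 0, 0, 0;
     0, 0, 0, 0, 0, l^2, -l^2, l^2, -l^2;
     0, -2*l^3, 0, 2*l^3, 0, l^3, -l^3, -l^3, l^3;
     0, 0, -2*l^3, 0, 2*l^3, l^3, l^3, -l^3, -l^3;
     4*l^4, -2*l^4, -2*l^4, -2*l^4, -2*l^4, l^4, l^4, l^4, l^4]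

/-- Fluid collision matrix (equation 14). -/
def Cfl (l a b se sx sq sd : ℝ) : Matrix (Fin 9) (Fin 9) ℝ :=
  !![1, 0, 0, 0, 0, 0, 0, 0, 0;
     0, 1, 0, 0, 0, 0, 0, 0, 0;
     0, 0, 1, 0, 0, 0, 0, 0, 0;
     a*se*l^2, 0, 0, 1 - se, 0, 0, 0, 0, 0;
     0, 0, 0, 0, 1 - sx, 0, 0, 0, 0;
     0, 0, 0, 0, 0, 1 - sx, 0, 0, 0;
     0, -sq*l^2, 0, 0, 0, 0, 1 - sq, 0, 0;
     0, 0, -sq*l^2, 0, 0, 0, 0, 1 - sq, 0;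
     b*sd*l^4, 0, 0, 0, 0, 0, 0, 0, 1 - sd]

/-- Matrix U (equation 21): diagonal 0/1 with ones at positions 0,1,3,4,7,8. -/
def Ub : Matrix (Fin 9) (Fin 9) ℝ :=
  !![1, 0, 0, 0, 0, 0, 0, 0, 0;
     0, 1, 0, 0, 0, 0, 0, 0, 0;
     0, 0, 0, 0, 0, 0, 0, 0, 0;
     0, 0, 0, 1, 0, 0, 0, 0, 0;
     0, 0, 0, 0, 1, 0, 0, 0, 0;
     0, 0, 0, 0, 0, 0, 0, 0, 0;
     0, 0, 0, 0, 0, 0, 0, 0, 0;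
     0, 0, 0, 0, 0, 0, 0, 1, 0;
     0, 0, 0, 0, 0, 0, 0, 0, 1]

/-- Mixed bounce back / anti bounce back interaction matrix T (equation 35). -/
def Tmix : Matrix (Fin 9) (Fin 9) ℝ :=
  !![0, 0, 0, 0, 0, 0, 0, 0, 0;
     0, 0, 0, 0, 0, 0, 0, 0, 0;
     0, 0, 0, 0, -1, 0, 0, 0, 0;
     0, 0, 0, 0, 0, 0, 0, 0, 0;
     0, 0, 0, 0, 0, 0, 0, 0, 0;
     0, 0, 0, 0, 0, 0, 0, 1, 0;
     0, 0, 0, 0, 0, 0, 0, 0, 1;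
     0, 0, 0, 0, 0, 0, 0, 0, 0;
     0, 0, 0, 0, 0, 0, 0, 0, 0]

/-- Mixed bounce back / anti bounce back boundary matrix K (equation 36). -/
def Kmix (l a b se sx sq sd : ℝ) : Matrix (Fin 9) (Fin 9) ℝ :=
  1 - Md l * (Tmix + Ub) * (Md l)⁻¹ * Cfl l a b se sx sq sd

/-!
The vector `m₀` collects the equilibrium moments, so the fluid collision fixes it and
`m₀ = M f⁰` for the D2Q9 equilibrium distribution `f⁰`. Hence
`K m₀ = m₀ - M (T + U) M⁻¹ m₀ = M (f⁰ - (T + U) f⁰)`, and the reflection `T + U` pairs the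
populations of `f⁰` so that `f⁰ - (T + U) f⁰ = ξ₀`. `M` is invertible, so `M⁻¹` is not a
junk value, because its rows are orthogonal.
-/

theorem Matrix.isUnit_det_of_mul_transpose_eq_diagonal {R n : Type*} [CommRing R] [Fintype n]
    [DecidableEq n] {M : Matrix n n R} {d : n → R} (h : M * Mᵀ = diagonal d)
    (hd : ∀ i, IsUnit (d i)) : IsUnit M.det := by
  have hdet := det_mul M Mᵀ
  rw [det_transpose, h, det_diagonal] at hdet
  exact isUnit_of_mul_isUnit_left (hdet ▸ IsUnit.prod_univ_iff.mpr hd)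

theorem Matrix.one_sub_mul_mul_inv_mul_mulVec {R n : Type*} [CommRing R] [Fintype n]
    [DecidableEq n] {M A C : Matrix n n R} {m f : n → R} (hM : IsUnit M.det)
    (hC : C *ᵥ m = m) (hf : M *ᵥ f = m) :
    (1 - M * A * M⁻¹ * C) *ᵥ m = M *ᵥ (f - A *ᵥ f) := by
  rw [sub_mulVec, one_mulVec, ← mulVec_mulVec, hC, ← mulVec_mulVec, ← mulVec_mulVec, ← hf,
    mulVec_mulVec f M⁻¹, nonsing_inv_mul M hM, one_mulVec, mulVec_sub]

theorem Md_mul_transpose (l : ℝ) :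
    Md l * (Md l)ᵀ =
      diagonal ![9, 6*l^2, 6*l^2, 36*l^4, 4*l^4, 4*l^4, 12*l^6, 12*l^6, 36*l^8] := by
  ext i j
  fin_cases i <;> fin_cases j <;> simp [Md, mul_apply, Fin.sum_univ_succ, diagonal] <;> ring

theorem isUnit_det_Md {l : ℝ} (hl : l ≠ 0) : IsUnit (Md l).det :=
  isUnit_det_of_mul_transpose_eq_diagonal (Md_mul_transpose l) fun i => by
    fin_cases i <;> simp [hl]

def equilibriumMoments (l a b ρ Jx Jy : ℝ) : Fin 9 → ℝ :=
  ![ρ, Jx, Jy, a*l^2*ρ, 0, 0, -l^2*Jx, -l^2*Jy, b*l^4*ρ]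

/-- The D2Q9 equilibrium distribution, i.e. `(Md l)⁻¹ *ᵥ equilibriumMoments l a b ρ Jx Jy`. -/
def equilibriumDistribution (l a b ρ Jx Jy : ℝ) : Fin 9 → ℝ :=
  ![(1 - a + b)*ρ/9,
    (4 - a - 2*b)*ρ/36 + Jx/(3*l),
    (4 - a - 2*b)*ρ/36 + Jy/(3*l),
    (4 - a - 2*b)*ρ/36 - Jx/(3*l),
    (4 - a - 2*b)*ρ/36 - Jy/(3*l),
    (4 + 2*a + b)*ρ/36 + (Jx + Jy)/(12*l),
    (4 + 2*a + b)*ρ/36 + (-Jx + Jy)/(12*l),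
    (4 + 2*a + b)*ρ/36 - (Jx + Jy)/(12*l),
    (4 + 2*a + b)*ρ/36 + (Jx - Jy)/(12*l)]

theorem Cfl_mulVec_equilibriumMoments (l a b se sx sq sd ρ Jx Jy : ℝ) :
    Cfl l a b se sx sq sd *ᵥ equilibriumMoments l a b ρ Jx Jy =
      equilibriumMoments l a b ρ Jx Jy := by
  ext i
  fin_cases i <;> simp [Cfl, equilibriumMoments, mulVec, dotProduct, Fin.sum_univ_succ] <;> ring

theorem Md_mulVec_equilibriumDistribution {l : ℝ} (hl : l ≠ 0) (a b ρ Jx Jy : ℝ) :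
    Md l *ᵥ equilibriumDistribution l a b ρ Jx Jy = equilibriumMoments l a b ρ Jx Jy := by
  ext i
  fin_cases i <;>
    simp [Md, equilibriumDistribution, equilibriumMoments, mulVec, dotProduct, Fin.sum_univ_succ] <;>
    field_simp <;> ring

theorem Tmix_add_Ub_mulVec (v : Fin 9 → ℝ) :
    (Tmix + Ub) *ᵥ v = ![v 0, v 1, -v 4, v 3, v 4, v 7, v 8, v 7, v 8] := by
  ext i
  fin_cases i <;> simp [Tmix, Ub, mulVec, dotProduct, Fin.sum_univ_succ]

theorem equilibriumDistribution_sub_Tmix_add_Ub_mulVec (l a b ρ Jx Jy : ℝ) :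
    equilibriumDistribution l a b ρ Jx Jy - (Tmix + Ub) *ᵥ equilibriumDistribution l a b ρ Jx Jy =
      ![0, 0, (4 - a - 2*b)*ρ/18, 0, 0, (Jx + Jy)/(6*l), (-Jx + Jy)/(6*l), 0, 0] := by
  rw [Tmix_add_Ub_mulVec]
  ext i
  fin_cases i <;> simp [equilibriumDistribution] <;> ring

theorem Kmix_order_zero_solution (l a b se sx sq sd ρ₀ Jx0 Jy0 : ℝ) (hl : l ≠ 0) :
    (Kmix l a b se sx sq sd).mulVec
        (![ρ₀, Jx0, Jy0, a*l^2*ρ₀, 0, 0, -l^2*Jx0, -l^2*Jy0, b*l^4*ρ₀])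
      = (Md l).mulVec
        (![0, 0, (4 - a - 2*b)*ρ₀/18, 0, 0, (Jx0 + Jy0)/(6*l), (-Jx0 + Jy0)/(6*l), 0, 0]) := by
  rw [Kmix, ← equilibriumDistribution_sub_Tmix_add_Ub_mulVec]
  exact one_sub_mul_mul_inv_mul_mulVec (isUnit_det_Md hl) (Cfl_mulVec_equilibriumMoments ..)
    (Md_mulVec_equilibriumDistribution hl ..)
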